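/- arXiv:2106.15370 — 3 statements merged into one kernel-verified Lean document; each statement's English description precedes it below -/
import Mathlib

section
/- (HK part 1) Suppose two Hermitian operators H = H_0 + V and H' = H_0 + V' on Λ^N ℂ^M, where V and V' are diagonal operators induced by potentials v, v' ∈ ℝ^M via V e_I = (Σ_{i∈I} v_i) e_I, have ground states Ψ and Ψ' with the same density ρ. Then Ψ is also a ground state of H' and Ψ' is also a ground state of H. -/
open scoped BigOperators

abbrev FIdx (M N : ℕ) := {I : Finset (Fin M) // I.card = N}

/-- Density of a fermionic state. -/
def density (M N : ℕ) (Ψ : FIdx M N → ℂ) (i : Fin M) : ℝ :=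
  ∑ I : FIdx M N, if i ∈ I.1 then Complex.normSq (Ψ I) else 0

/-- The diagonal potential operator on `Λ^N ℂ^M` induced by `v ∈ ℝ^M`:
`V e_I = (Σ_{i∈I} v_i) e_I`. -/
def Vmat (M N : ℕ) (v : Fin M → ℝ) : Matrix (FIdx M N) (FIdx M N) ℂ :=
  Matrix.diagonal fun I => ((∑ i ∈ I.1, v i : ℝ) : ℂ)

/-- The (real) quadratic form `⟨Ψ, HΨ⟩`. -/
noncomputable def quadForm (M N : ℕ) (H : Matrix (FIdx M N) (FIdx M N) ℂ) (Ψ : FIdx M N → ℂ) : ℝ :=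
  (dotProduct (star Ψ) (H.mulVec Ψ)).re

/-- A ground state: a normalized minimizer of the quadratic form over the unit sphere. -/
def IsGroundState (M N : ℕ) (H : Matrix (FIdx M N) (FIdx M N) ℂ) (Ψ : FIdx M N → ℂ) : Prop :=
  (∑ I : FIdx M N, Complex.normSq (Ψ I) = 1) ∧
  ∀ Φ : FIdx M N → ℂ, (∑ I : FIdx M N, Complex.normSq (Φ I) = 1) →
    quadForm M N H Ψ ≤ quadForm M N H Φ

/-! Write `E(Φ) = ⟨Φ, HΦ⟩` and `E'(Φ) = ⟨Φ, H'Φ⟩`. The difference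
`E(Φ) - E'(Φ) = Σ_i (v_i - v'_i) ρ_Φ(i)` depends on `Φ` only through its density, so it takes the
same value at `Ψ` and `Ψ'`. Together with `E(Ψ) ≤ E(Ψ')` and `E'(Ψ') ≤ E'(Ψ)` this forces
`E(Ψ) = E(Ψ')` and `E'(Ψ) = E'(Ψ')`. -/

theorem IsMinOn.swap_of_sub_eq {α β : Type*} [AddCommGroup β] [LinearOrder β]
    [IsOrderedAddMonoid β] {f g : α → β} {s : Set α} {a b : α}
    (hf : IsMinOn f s a) (hg : IsMinOn g s b) (ha : a ∈ s) (hb : b ∈ s)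
    (hab : f a - g a = f b - g b) : IsMinOn g s a ∧ IsMinOn f s b := by
  have hfab : f a ≤ f b := isMinOn_iff.1 hf b hb
  have hgba : g b ≤ g a := isMinOn_iff.1 hg a ha
  have hdiff : f a - f b = g a - g b := sub_eq_sub_iff_sub_eq_sub.1 hab
  have hg_eq : g a = g b := le_antisymm (sub_nonpos.1 (hdiff ▸ sub_nonpos.2 hfab)) hgba
  have hf_eq : f a = f b := sub_eq_zero.1 (hdiff.trans (sub_eq_zero.2 hg_eq))
  exact ⟨isMinOn_iff.2 fun x hx => hg_eq ▸ isMinOn_iff.1 hg x hx,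
    isMinOn_iff.2 fun x hx => hf_eq ▸ isMinOn_iff.1 hf x hx⟩

theorem isGroundState_iff_isMinOn (M N : ℕ) (H : Matrix (FIdx M N) (FIdx M N) ℂ)
    (Ψ : FIdx M N → ℂ) :
    IsGroundState M N H Ψ ↔
      Ψ ∈ {Φ | ∑ I, Complex.normSq (Φ I) = 1} ∧
        IsMinOn (quadForm M N H) {Φ | ∑ I, Complex.normSq (Φ I) = 1} Ψ := by
  rw [isMinOn_iff]
  rfl

theorem quadForm_add (M N : ℕ) (A B : Matrix (FIdx M N) (FIdx M N) ℂ) (Ψ : FIdx M N → ℂ) :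
    quadForm M N (A + B) Ψ = quadForm M N A Ψ + quadForm M N B Ψ := by
  simp [quadForm, Matrix.add_mulVec, dotProduct_add]

theorem quadForm_Vmat (M N : ℕ) (v : Fin M → ℝ) (Ψ : FIdx M N → ℂ) :
    quadForm M N (Vmat M N v) Ψ = ∑ i, v i * density M N Ψ i := by
  have hdiag : quadForm M N (Vmat M N v) Ψ
      = ∑ I : FIdx M N, (∑ i ∈ I.1, v i) * Complex.normSq (Ψ I) := by
    simp only [quadForm, Vmat, dotProduct, Matrix.mulVec_diagonal, Pi.star_apply,
      Complex.re_sum]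
    refine Finset.sum_congr rfl fun I _ => ?_
    rw [Complex.star_def, mul_left_comm, ← Complex.normSq_eq_conj_mul_self,
      ← Complex.ofReal_mul, Complex.ofReal_re]
  rw [hdiag]
  simp only [density, Finset.mul_sum, Finset.sum_mul, mul_ite, mul_zero]
  rw [Finset.sum_comm]
  exact Finset.sum_congr rfl fun I _ => by rw [Finset.sum_ite_mem, Finset.univ_inter]

theorem quadForm_add_Vmat_sub_add_Vmat (M N : ℕ) (H0 : Matrix (FIdx M N) (FIdx M N) ℂ)
    (v v' : Fin M → ℝ) (Ψ : FIdx M N → ℂ) :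
    quadForm M N (H0 + Vmat M N v) Ψ - quadForm M N (H0 + Vmat M N v') Ψ
      = ∑ i, (v i - v' i) * density M N Ψ i := by
  simp only [quadForm_add, quadForm_Vmat, sub_mul, Finset.sum_sub_distrib]
  ring

theorem HK_part1_general (M N : ℕ) (H0 : Matrix (FIdx M N) (FIdx M N) ℂ)
    (v v' : Fin M → ℝ) (Ψ Ψ' : FIdx M N → ℂ)
    (hΨ : IsGroundState M N (H0 + Vmat M N v) Ψ)
    (hΨ' : IsGroundState M N (H0 + Vmat M N v') Ψ')
    (hρ : density M N Ψ = density M N Ψ') :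
    IsGroundState M N (H0 + Vmat M N v') Ψ ∧ IsGroundState M N (H0 + Vmat M N v) Ψ' := by
  simp only [isGroundState_iff_isMinOn] at hΨ hΨ' ⊢
  have hsub := quadForm_add_Vmat_sub_add_Vmat M N H0 v v'
  obtain ⟨hmin', hmin⟩ := hΨ.2.swap_of_sub_eq hΨ'.2 hΨ.1 hΨ'.1 (by rw [hsub, hsub, hρ])
  exact ⟨⟨hΨ.1, hmin'⟩, hΨ'.1, hmin⟩

/-- (HK part 1) If `H = H₀ + V` and `H' = H₀ + V'` have ground states `Ψ` and `Ψ'` with the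
same density, then `Ψ` is also a ground state of `H'` and `Ψ'` is also a ground state of `H`. -/
theorem HK_part1 (M N : ℕ) (H0 : Matrix (FIdx M N) (FIdx M N) ℂ) (hH0 : H0.IsHermitian)
    (v v' : Fin M → ℝ) (Ψ Ψ' : FIdx M N → ℂ)
    (hΨ : IsGroundState M N (H0 + Vmat M N v) Ψ)
    (hΨ' : IsGroundState M N (H0 + Vmat M N v') Ψ')
    (hρ : density M N Ψ = density M N Ψ') :
    IsGroundState M N (H0 + Vmat M N v') Ψ ∧ IsGroundState M N (H0 + Vmat M N v) Ψ' :=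
  HK_part1_general M N H0 v v' Ψ Ψ' hΨ hΨ' hρ
end

section
/- Let Ψ be an eigenvector of H_0 + V on Λ^N ℂ^M with 1 ≤ N < M. If the number of multi-indices I with Ψ_I ≠ 0 is strictly larger than the Odlyzko number g(M,N), then Ψ is not an eigenvector of H_0 + V' for any potential v' that differs from v by more than an additive constant. -/
open scoped BigOperators

/-- The Odlyzko number `g(M,N)`. -/
def gOdlyzko (M N : ℕ) : ℕ :=
  if 2 * N < M then (M - 1).choose N
  else if M = 2 * N then 2 * ((M - 2).choose (N - 1))
  else (M - 1).choose (N - 1)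


set_option linter.unreachableTactic false
set_option linter.unusedTactic false
set_option linter.unusedSectionVars false
set_option linter.unusedVariables false

open Finset in


lemma choose_step_le {n k : ℕ} (h : 2 * k < n) : n.choose k ≤ n.choose (k+1) := by
  have h1 := Nat.choose_succ_right_eq n k
  have h2 : n.choose k * (k+1) ≤ n.choose k * (n - k) :=
    Nat.mul_le_mul_left _ (by omega)
  have h3 : n.choose k * (k+1) ≤ n.choose (k+1) * (k+1) := by omega
  exact Nat.le_of_mul_le_mul_right h3 (Nat.succ_pos k)

lemma choose_step_ge {n k : ℕ} (h : n ≤ 2*k + 1) : n.choose (k+1) ≤ n.choose k := by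
  have h1 := Nat.choose_succ_right_eq n k
  have h2 : n.choose k * (n - k) ≤ n.choose k * (k+1) :=
    Nat.mul_le_mul_left _ (by omega)
  have h3 : n.choose (k+1) * (k+1) ≤ n.choose k * (k+1) := by omega
  exact Nat.le_of_mul_le_mul_right h3 (Nat.succ_pos k)

lemma vander_two {m n K p q : ℕ} (hpq : p ≠ q) (hp : p ≤ K) (hq : q ≤ K) :
    m.choose p * n.choose (K-p) + m.choose q * n.choose (K-q) ≤ (m+n).choose K := by
  rw [Nat.add_choose_eq]
  have hsub : ({(p, K-p), (q, K-q)} : Finset (ℕ × ℕ)) ⊆ Finset.HasAntidiagonal.antidiagonal K := by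
    intro ij hij
    simp only [Finset.mem_insert, Finset.mem_singleton] at hij
    rcases hij with rfl | rfl <;> simp [Finset.HasAntidiagonal.mem_antidiagonal] <;> omega
  have hne : ((p, K-p) : ℕ × ℕ) ≠ (q, K-q) := fun h => hpq (congrArg Prod.fst h)
  calc m.choose p * n.choose (K-p) + m.choose q * n.choose (K-q)
      = ∑ ij ∈ ({(p, K-p), (q, K-q)} : Finset (ℕ × ℕ)), m.choose ij.1 * n.choose ij.2 := by
        rw [Finset.sum_pair hne]
    _ ≤ ∑ ij ∈ Finset.HasAntidiagonal.antidiagonal K, m.choose ij.1 * n.choose ij.2 :=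
        Finset.sum_le_sum_of_subset hsub


lemma L1a {a b k j : ℕ} (ha : 1 ≤ a) (hb : 1 ≤ b) (hk : k ≤ a) (hj : j ≤ b)
    (h : 2*(k+j) < a+b) : a.choose k * b.choose j ≤ (a+b-1).choose (k+j) := by
  rcases lt_or_ge (2*k) a with h2k | h2k
  · -- 2k < a
    rcases Nat.eq_zero_or_pos j with rfl | hj1
    · simpa using Nat.choose_le_choose k (show a ≤ a+b-1 by omega)
    · obtain ⟨j', rfl⟩ : ∃ j', j = j' + 1 := ⟨j-1, by omega⟩
      have hb1 : b - 1 + 1 = b := by omega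
      have hpas : b.choose (j'+1) = (b-1).choose j' + (b-1).choose (j'+1) := by
        rw [← hb1]; exact Nat.choose_succ_succ (b-1) j'
      have habm : a + b - 1 = a + (b-1) := by omega
      rw [habm, hpas, Nat.mul_add]
      have hv := vander_two (m := a) (n := b-1) (K := k + (j'+1)) (p := k+1) (q := k)
        (by omega) (by omega) (by omega)
      have e1 : k + (j'+1) - (k+1) = j' := by omega
      have e2 : k + (j'+1) - k = j' + 1 := by omega
      rw [e1, e2] at hv
      have hstep : a.choose k * (b-1).choose j' ≤ a.choose (k+1) * (b-1).choose j' :=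
        Nat.mul_le_mul_right _ (choose_step_le h2k)
      omega
  · -- 2k ≥ a, so 2j < b
    have h2j : 2*j < b := by omega
    rcases Nat.eq_zero_or_pos k with rfl | hk1
    · simpa using Nat.choose_le_choose j (show b ≤ a+b-1 by omega)
    · obtain ⟨k', rfl⟩ : ∃ k', k = k' + 1 := ⟨k-1, by omega⟩
      have ha1 : a - 1 + 1 = a := by omega
      have hpas : a.choose (k'+1) = (a-1).choose k' + (a-1).choose (k'+1) := by
        rw [← ha1]; exact Nat.choose_succ_succ (a-1) k'
      have habm : a + b - 1 = (a-1) + b := by omega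
      rw [habm, hpas, Nat.add_mul]
      have hv := vander_two (m := a-1) (n := b) (K := (k'+1) + j) (p := k') (q := k'+1)
        (by omega) (by omega) (by omega)
      have e1 : (k'+1) + j - k' = j + 1 := by omega
      have e2 : (k'+1) + j - (k'+1) = j := by omega
      rw [e1, e2] at hv
      have hstep : (a-1).choose k' * b.choose j ≤ (a-1).choose k' * b.choose (j+1) :=
        Nat.mul_le_mul_left _ (choose_step_le h2j)
      omega

lemma L1bAux {a b k j : ℕ} (ha : 1 ≤ a) (hb : 1 ≤ b) (hk : k ≤ a) (hj : j ≤ b)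
    (heq : 2*(k+j) = a+b) (hka : 2*k ≤ a) :
    a.choose k * b.choose j ≤ 2 * ((a+b-2).choose (k+j-1)) := by
  rcases Nat.eq_zero_or_pos k with rfl | hk1
  · obtain ⟨j', rfl⟩ : ∃ j', j = j' + 1 := ⟨j-1, by omega⟩
    have h1 : b.choose (j'+1) ≤ (a+b-1).choose (j'+1) :=
      Nat.choose_le_choose _ (by omega)
    have hab1 : a + b - 1 = (a+b-2) + 1 := by omega
    have hpas : (a+b-1).choose (j'+1) = (a+b-2).choose j' + (a+b-2).choose (j'+1) := by
      rw [hab1]; exact Nat.choose_succ_succ _ j'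
    have hstep : (a+b-2).choose (j'+1) ≤ (a+b-2).choose j' :=
      choose_step_ge (by omega)
    have e : 0 + (j'+1) - 1 = j' := by omega
    rw [e]
    simp only [Nat.choose_zero_right, one_mul]
    omega
  · obtain ⟨k', rfl⟩ : ∃ k', k = k' + 1 := ⟨k-1, by omega⟩
    have hj1 : 1 ≤ j := by omega
    obtain ⟨j', rfl⟩ : ∃ j', j = j' + 1 := ⟨j-1, by omega⟩
    have ha1 : a - 1 + 1 = a := by omega
    have hb1 : b - 1 + 1 = b := by omega
    have hpa : a.choose (k'+1) = (a-1).choose k' + (a-1).choose (k'+1) := by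
      rw [← ha1]; exact Nat.choose_succ_succ _ k'
    have hpb : b.choose (j'+1) = (b-1).choose j' + (b-1).choose (j'+1) := by
      rw [← hb1]; exact Nat.choose_succ_succ _ j'
    have hxX : (a-1).choose k' ≤ (a-1).choose (k'+1) := choose_step_le (by omega)
    have hYy : (b-1).choose (j'+1) ≤ (b-1).choose j' := choose_step_ge (by omega)
    have hmid : ∀ (x X Y y : ℕ), x ≤ X → Y ≤ y → x*y + X*Y ≤ X*y + x*Y := by
      intro x X Y y h1 h2
      obtain ⟨d, rfl⟩ := Nat.exists_eq_add_of_le h1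
      obtain ⟨e, rfl⟩ := Nat.exists_eq_add_of_le h2
      nlinarith [Nat.zero_le (d*e)]
    have hmid' := hmid _ _ _ _ hxX hYy
    have hv := vander_two (m := a-1) (n := b-1) (K := k'+j'+1) (p := k'+1) (q := k')
      (by omega) (by omega) (by omega)
    have e1 : k'+j'+1 - (k'+1) = j' := by omega
    have e2 : k'+j'+1 - k' = j'+1 := by omega
    rw [e1, e2] at hv
    have habm : (a-1) + (b-1) = a + b - 2 := by omega
    rw [habm] at hv
    have ekj : (k'+1) + (j'+1) - 1 = k'+j'+1 := by omega
    rw [hpa, hpb, ekj]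
    have hexp : ((a-1).choose k' + (a-1).choose (k'+1)) * ((b-1).choose j' + (b-1).choose (j'+1))
        = ((a-1).choose k' * (b-1).choose j' + (a-1).choose (k'+1) * (b-1).choose (j'+1))
          + ((a-1).choose (k'+1) * (b-1).choose j' + (a-1).choose k' * (b-1).choose (j'+1)) := by
      ring
    rw [hexp]
    omega

lemma L1b {a b k j : ℕ} (ha : 1 ≤ a) (hb : 1 ≤ b) (hk : k ≤ a) (hj : j ≤ b)
    (heq : 2*(k+j) = a+b) : a.choose k * b.choose j ≤ 2 * ((a+b-2).choose (k+j-1)) := by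
  rcases le_or_gt (2*k) a with hka | hka
  · exact L1bAux ha hb hk hj heq hka
  · have := L1bAux hb ha hj hk (by omega) (by omega)
    calc a.choose k * b.choose j = b.choose j * a.choose k := by ring
      _ ≤ 2 * ((b+a-2).choose (j+k-1)) := this
      _ = 2 * ((a+b-2).choose (k+j-1)) := by rw [Nat.add_comm b a, Nat.add_comm j k]

lemma g_lt {M N : ℕ} (h : 2*N < M) : gOdlyzko M N = (M-1).choose N := if_pos h

lemma g_mid {M N : ℕ} (h : M = 2*N) : gOdlyzko M N = 2 * ((M-2).choose (N-1)) := by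
  rw [gOdlyzko, if_neg (by omega), if_pos h]

lemma g_gt {M N : ℕ} (h : M < 2*N) : gOdlyzko M N = (M-1).choose (N-1) := by
  rw [gOdlyzko, if_neg (by omega), if_neg (by omega)]
lemma gsymm {M N : ℕ} (h : N ≤ M) : gOdlyzko M (M - N) = gOdlyzko M N := by
  rcases lt_trichotomy (2*N) M with hlt | heq | hgt
  · rw [g_lt hlt, g_gt (by omega)]
    have e : M - N - 1 = (M-1) - N := by omega
    rw [e, Nat.choose_symm (by omega)]
  · rw [g_mid (by omega), g_mid heq.symm]
    have e : M - N - 1 = N - 1 := by omega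
    rw [e]
  · rw [g_gt hgt, g_lt (by omega)]
    have e : M - N = (M-1) - (N-1) := by omega
    rw [e, Nat.choose_symm (by omega)]

lemma g_M0 {M : ℕ} (h : 1 ≤ M) : gOdlyzko M 0 = 1 := by
  rw [g_lt (by omega), Nat.choose_zero_right]

lemma g_MM {M : ℕ} (h : 1 ≤ M) : gOdlyzko M M = 1 := by
  rw [g_gt (by omega), Nat.choose_self]

lemma g_M1 {M : ℕ} (h : 2 ≤ M) : M - 1 ≤ gOdlyzko M 1 := by
  rcases eq_or_lt_of_le h with rfl | h2
  · rw [g_mid (by norm_num)]; norm_num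
  · rw [g_lt (by omega), Nat.choose_one_right]

lemma step3 {m k : ℕ} (h : 2*(k+2) ≤ m + 2) :
    gOdlyzko m k + m.choose (k+1) + gOdlyzko m (k+2) ≤ gOdlyzko (m+2) (k+2) := by
  have hg1 : gOdlyzko m k = (m-1).choose k := g_lt (by omega)
  have hm2 : 2*k+2 ≤ m := by omega
  rcases lt_or_ge m (2*k+5) with hm | hm
  · -- m ∈ {2k+2, 2k+3, 2k+4}
    have hcases : m = 2*k+2 ∨ m = 2*k+3 ∨ m = 2*k+4 := by omega
    rcases hcases with rfl | rfl | rfl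
    · -- m = 2k+2
      rw [hg1, g_gt (by omega), g_mid (by omega : 2*k+2+2 = 2*(k+2))]
      have e1 : 2*k+2-1 = 2*k+1 := by omega
      have e2 : 2*k+2+2-2 = 2*k+1+1 := by omega
      rw [e1, e2]
      have hp : (2*k+1+1).choose (k+1) = (2*k+1).choose k + (2*k+1).choose (k+1) :=
        Nat.choose_succ_succ _ _
      have hq : (2*k+2).choose (k+1) = (2*k+1+1).choose (k+1) := by norm_num
      have e3 : k + 2 - 1 = k + 1 := by omega
      rw [e3]
      omega
    · -- m = 2k+3
      rw [hg1, g_gt (by omega), g_lt (by omega)]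
      have e1 : 2*k+3-1 = 2*k+2 := by omega
      have e2 : 2*k+3+2-1 = 2*k+4 := by omega
      have e3 : k+2-1 = k+1 := by omega
      rw [e1, e2, e3]
      have hp1 : (2*k+2+1).choose (k+1) = (2*k+2).choose k + (2*k+2).choose (k+1) :=
        Nat.choose_succ_succ _ _
      have hp2 : (2*k+3+1).choose (k+1+1) = (2*k+3).choose (k+1) + (2*k+3).choose (k+2) :=
        Nat.choose_succ_succ _ _
      have hsym : (2*k+3).choose (k+2) = (2*k+3).choose (k+1) := by
        have := Nat.choose_symm (n := 2*k+3) (k := k+1) (by omega)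
        have e : 2*k+3-(k+1) = k+2 := by omega
        rw [e] at this; exact this
      have h23 : (2*k+3).choose (k+1) = (2*k+2).choose k + (2*k+2).choose (k+1) := hp1
      have h24 : (2*k+4).choose (k+2) = (2*k+3).choose (k+1) + (2*k+3).choose (k+2) := hp2
      omega
    · -- m = 2k+4
      rw [hg1, g_mid (by omega), g_lt (by omega)]
      have e1 : (2*k+4-1).choose k = (2*k+3).choose k := by congr 1 <;> try omega
      have e2 : (2*k+4-2).choose (k+2-1) = (2*k+2).choose (k+1) := by congr 1 <;> try omega
      have e3 : (2*k+4+2-1).choose (k+2) = (2*k+5).choose (k+2) := by congr 1 <;> try omega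
      rw [e1, e2, e3]
      have p1 : (2*k+5).choose (k+2) = (2*k+4).choose (k+1) + (2*k+4).choose (k+2) := by
        have := Nat.choose_succ_succ (2*k+4) (k+1)
        convert this using 2 <;> omega
      have p2 : (2*k+4).choose (k+2) = (2*k+3).choose (k+1) + (2*k+3).choose (k+2) := by
        have := Nat.choose_succ_succ (2*k+3) (k+1)
        convert this using 2 <;> omega
      have p3 : (2*k+3).choose (k+1) = (2*k+2).choose k + (2*k+2).choose (k+1) := by
        have := Nat.choose_succ_succ (2*k+2) k
        convert this using 2 <;> omega
      have p4 : (2*k+3).choose (k+2) = (2*k+2).choose (k+1) + (2*k+2).choose (k+2) := by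
        have := Nat.choose_succ_succ (2*k+2) (k+1)
        convert this using 2 <;> omega
      have p8 : (2*k+2).choose (k+2) = (2*k+2).choose k := by
        have := Nat.choose_symm (n := 2*k+2) (k := k) (by omega)
        have e : 2*k+2-k = k+2 := by omega
        rw [e] at this; exact this
      have p6 : (2*k+3).choose k ≤ (2*k+2).choose k + (2*k+2).choose k := by
        rcases Nat.eq_zero_or_pos k with rfl | hk
        · simp
        · obtain ⟨k', rfl⟩ : ∃ k', k = k'+1 := ⟨k-1, by omega⟩
          have hp : (2*(k'+1)+3).choose (k'+1)
              = (2*(k'+1)+2).choose k' + (2*(k'+1)+2).choose (k'+1) := by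
            have := Nat.choose_succ_succ (2*(k'+1)+2) k'
            convert this using 2 <;> omega
          have hd : (2*(k'+1)+2).choose k' ≤ (2*(k'+1)+2).choose (k'+1) :=
            choose_step_le (by omega)
          have hd2 : (2*(k'+1)+2).choose (k'+1) ≤ (2*(k'+1)+2).choose (k'+1)
              + ((2*(k'+1)+2).choose (k'+1) - (2*(k'+1)+2).choose k') := by omega
          omega
      omega
  · -- m ≥ 2k+5
    rw [hg1, g_lt (by omega : 2*(k+2) < m), g_lt (by omega)]
    have hm1 : m - 1 + 1 = m := by omega
    have p1 : (m+2-1).choose (k+2) = m.choose (k+1) + m.choose (k+2) := by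
      have e : m + 2 - 1 = m + 1 := by omega
      rw [e]; exact Nat.choose_succ_succ _ _
    have p2 : m.choose (k+2) = (m-1).choose (k+1) + (m-1).choose (k+2) := by
      conv_lhs => rw [← hm1]
      exact Nat.choose_succ_succ _ _
    have p3 : (m-1).choose k ≤ (m-1).choose (k+1) := choose_step_le (by omega)
    omega

section FamSection

variable {ι : Type*} [DecidableEq ι]

open Classical in
noncomputable def fam (w : ι → ℝ) (S : Finset ι) (n : ℕ) (t : ℝ) : Finset (Finset ι) :=
  (S.powersetCard n).filter (fun I => ∑ i ∈ I, w i = t)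
lemma mem_fam {w : ι → ℝ} {S : Finset ι} {n : ℕ} {t : ℝ} {I : Finset ι} :
    I ∈ fam w S n t ↔ I ⊆ S ∧ I.card = n ∧ ∑ i ∈ I, w i = t := by
  simp [fam, Finset.mem_filter, Finset.mem_powersetCard, and_assoc]

lemma fam_card_le_choose (w : ι → ℝ) (S : Finset ι) (n : ℕ) (t : ℝ) :
    (fam w S n t).card ≤ S.card.choose n := by
  calc (fam w S n t).card ≤ (S.powersetCard n).card :=
        Finset.card_le_card (Finset.filter_subset _ _)
    _ = S.card.choose n := Finset.card_powersetCard n S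

lemma fam_compl_card (w : ι → ℝ) (S : Finset ι) (n : ℕ) (t : ℝ) (hn : n ≤ S.card) :
    (fam w S n t).card = (fam w S (S.card - n) ((∑ i ∈ S, w i) - t)).card := by
  refine Finset.card_bij' (fun I _ => S \ I) (fun I _ => S \ I) ?_ ?_ ?_ ?_
  · intro I hI
    rw [mem_fam] at hI ⊢
    obtain ⟨hsub, hcard, hsum⟩ := hI
    refine ⟨Finset.sdiff_subset, by rw [Finset.card_sdiff_of_subset hsub, hcard], ?_⟩
    have := Finset.sum_sdiff (f := w) hsub
    linarith
  · intro I hI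
    rw [mem_fam] at hI ⊢
    obtain ⟨hsub, hcard, hsum⟩ := hI
    refine ⟨Finset.sdiff_subset, ?_, ?_⟩
    · rw [Finset.card_sdiff_of_subset hsub, hcard]; omega
    · have := Finset.sum_sdiff (f := w) hsub
      linarith
  · intro I hI
    rw [mem_fam] at hI
    show S \ (S \ I) = I
    rw [Finset.sdiff_sdiff_self_left, Finset.inter_eq_right.mpr hI.1]
  · intro I hI
    rw [mem_fam] at hI
    show S \ (S \ I) = I
    rw [Finset.sdiff_sdiff_self_left, Finset.inter_eq_right.mpr hI.1]

theorem fam_card_le_g (w : ι → ℝ) : ∀ (M : ℕ) (S : Finset ι), S.card = M →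
    (∃ a ∈ S, ∃ b ∈ S, w a ≠ w b) → ∀ (n : ℕ) (t : ℝ),
    (fam w S n t).card ≤ gOdlyzko M n := by
  intro M
  induction M using Nat.strong_induction_on with
  | _ M IH =>
  intro S hS hnc n t
  obtain ⟨a, haS, b, hbS, hab⟩ := hnc
  have hM2 : 2 ≤ M := by
    rw [← hS]
    exact Finset.one_lt_card.mpr ⟨a, haS, b, hbS, fun h => hab (by rw [h])⟩
  -- n = 0 case
  have hzero : ∀ t : ℝ, (fam w S 0 t).card ≤ gOdlyzko M 0 := by
    intro t
    calc (fam w S 0 t).card ≤ S.card.choose 0 := fam_card_le_choose w S 0 t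
      _ = 1 := by rw [Nat.choose_zero_right]
      _ = gOdlyzko M 0 := (g_M0 (by omega)).symm
  -- n = 1 case
  have hone : ∀ t : ℝ, (fam w S 1 t).card ≤ gOdlyzko M 1 := by
    intro t
    by_cases hex : ∃ i ∈ S, w i = t
    · obtain ⟨j, hjS, hjt⟩ : ∃ j ∈ S, w j ≠ t := by
        by_cases h : w a = t
        · exact ⟨b, hbS, fun hb => hab (by rw [h, hb])⟩
        · exact ⟨a, haS, h⟩
      have hsub : fam w S 1 t ⊆ (S.erase j).powersetCard 1 := by
        intro I hI
        rw [mem_fam] at hI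
        obtain ⟨hIS, hc, hsum⟩ := hI
        rw [Finset.mem_powersetCard]
        refine ⟨?_, hc⟩
        obtain ⟨i, rfl⟩ := Finset.card_eq_one.mp hc
        rw [Finset.sum_singleton] at hsum
        intro x hx
        rw [Finset.mem_singleton] at hx
        subst hx
        exact Finset.mem_erase.mpr ⟨fun h => hjt (h ▸ hsum), hIS (Finset.mem_singleton_self x)⟩
      calc (fam w S 1 t).card ≤ ((S.erase j).powersetCard 1).card := Finset.card_le_card hsub
        _ = (S.erase j).card.choose 1 := Finset.card_powersetCard 1 _
        _ = M - 1 := by rw [Finset.card_erase_of_mem hjS, hS, Nat.choose_one_right]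
        _ ≤ gOdlyzko M 1 := g_M1 hM2
    · have : fam w S 1 t = ∅ := by
        rw [Finset.eq_empty_iff_forall_notMem]
        intro I hI
        rw [mem_fam] at hI
        obtain ⟨hIS, hc, hsum⟩ := hI
        obtain ⟨i, rfl⟩ := Finset.card_eq_one.mp hc
        rw [Finset.sum_singleton] at hsum
        exact hex ⟨i, hIS (Finset.mem_singleton_self i), hsum⟩
      rw [this]
      simp
  -- main auxiliary : 2 ≤ n and 2n ≤ M
  have aux : ∀ (n : ℕ) (t : ℝ), 2 ≤ n → 2*n ≤ M → (fam w S n t).card ≤ gOdlyzko M n := by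
    intro n t h2n hnM
    by_cases htwo : ∀ i ∈ S, w i = w a ∨ w i = w b
    · -- two-valued case
      set A := S.filter (fun i => w i = w a) with hA
      set B := S.filter (fun i => ¬ (w i = w a)) with hB
      have hcards : A.card + B.card = M := by
        rw [hA, hB, ← hS]
        exact Finset.card_filter_add_card_filter_not _
      have haA : a ∈ A := Finset.mem_filter.mpr ⟨haS, rfl⟩
      have hbB : b ∈ B := Finset.mem_filter.mpr ⟨hbS, fun h => hab h.symm⟩
      have hA1 : 1 ≤ A.card := Finset.card_pos.mpr ⟨a, haA⟩
      have hB1 : 1 ≤ B.card := Finset.card_pos.mpr ⟨b, hbB⟩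
      rcases (fam w S n t).eq_empty_or_nonempty with he | ⟨I₀, hI₀⟩
      · rw [he]; simp
      · have hsplit : ∀ I ∈ fam w S n t, (I ∩ A).card + (I ∩ B).card = n ∧
            ((I ∩ A).card : ℝ) * w a + ((I ∩ B).card : ℝ) * w b = t := by
          intro I hI
          rw [mem_fam] at hI
          obtain ⟨hIS, hc, hsum⟩ := hI
          have hIA : I ∩ A = I.filter (fun i => w i = w a) := by
            ext x
            simp only [Finset.mem_inter, hA, Finset.mem_filter]
            exact ⟨fun ⟨h1, h2⟩ => ⟨h1, h2.2⟩, fun ⟨h1, h2⟩ => ⟨h1, hIS h1, h2⟩⟩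
          have hIB : I ∩ B = I.filter (fun i => ¬ (w i = w a)) := by
            ext x
            simp only [Finset.mem_inter, hB, Finset.mem_filter]
            exact ⟨fun ⟨h1, h2⟩ => ⟨h1, h2.2⟩, fun ⟨h1, h2⟩ => ⟨h1, hIS h1, h2⟩⟩
          constructor
          · rw [hIA, hIB, Finset.card_filter_add_card_filter_not, hc]
          · have hsumA : ∑ i ∈ I.filter (fun i => w i = w a), w i
                = ((I.filter (fun i => w i = w a)).card : ℝ) * w a := by
              rw [Finset.sum_congr rfl (fun x hx => (Finset.mem_filter.mp hx).2),
                Finset.sum_const, nsmul_eq_mul]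
            have hsumB : ∑ i ∈ I.filter (fun i => ¬ (w i = w a)), w i
                = ((I.filter (fun i => ¬ (w i = w a))).card : ℝ) * w b := by
              rw [Finset.sum_congr rfl (fun x hx => ?_), Finset.sum_const, nsmul_eq_mul]
              have hx' := Finset.mem_filter.mp hx
              rcases htwo x (hIS hx'.1) with h | h
              · exact absurd h hx'.2
              · exact h
            have htot := Finset.sum_filter_add_sum_filter_not I (fun i => w i = w a) w
            rw [hIA, hIB]
            rw [hsumA, hsumB] at htot
            linarith
        obtain ⟨hkj₀, hsum₀⟩ := hsplit I₀ hI₀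
        have hcardk : ∀ I ∈ fam w S n t, (I ∩ A).card = (I₀ ∩ A).card
            ∧ (I ∩ B).card = (I₀ ∩ B).card := by
          intro I hI
          obtain ⟨h1, h2⟩ := hsplit I hI
          have hcast : ((I ∩ A).card : ℝ) + ((I ∩ B).card : ℝ)
              = ((I₀ ∩ A).card : ℝ) + ((I₀ ∩ B).card : ℝ) := by
            push_cast
            exact_mod_cast by omega
          have hlc : (((I ∩ A).card : ℝ) - ((I₀ ∩ A).card : ℝ)) * (w a - w b) = 0 := by
            linear_combination h2 - hsum₀ - w b * hcast
          rcases mul_eq_zero.mp hlc with h0 | h0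
          · have : ((I ∩ A).card : ℝ) = ((I₀ ∩ A).card : ℝ) := by linarith
            have hk' : (I ∩ A).card = (I₀ ∩ A).card := by exact_mod_cast this
            exact ⟨hk', by omega⟩
          · exact absurd (by linarith : w a = w b) hab
        have hinj : (fam w S n t).card
            ≤ (A.powersetCard ((I₀ ∩ A).card) ×ˢ B.powersetCard ((I₀ ∩ B).card)).card := by
          apply Finset.card_le_card_of_injOn (fun I => (I ∩ A, I ∩ B))
          · intro I hI
            simp only [Finset.mem_coe] at hI ⊢
            rw [Finset.mem_product, Finset.mem_powersetCard, Finset.mem_powersetCard]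
            obtain ⟨hk', hj'⟩ := hcardk I hI
            exact ⟨⟨Finset.inter_subset_right, hk'⟩, ⟨Finset.inter_subset_right, hj'⟩⟩
          · intro I hI I' hI' heqp
            simp only [Prod.mk.injEq] at heqp
            have hsub : ∀ J ∈ fam w S n t, J = (J ∩ A) ∪ (J ∩ B) := by
              intro J hJ
              rw [mem_fam] at hJ
              rw [← Finset.inter_union_distrib_left]
              refine (Finset.inter_eq_left.mpr ?_).symm
              intro x hx
              rw [Finset.mem_union, hA, hB, Finset.mem_filter, Finset.mem_filter]
              by_cases h : w x = w a
              · exact Or.inl ⟨hJ.1 hx, h⟩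
              · exact Or.inr ⟨hJ.1 hx, h⟩
            rw [hsub I hI, hsub I' hI', heqp.1, heqp.2]
        have hprod : (A.powersetCard ((I₀ ∩ A).card) ×ˢ B.powersetCard ((I₀ ∩ B).card)).card
            = A.card.choose ((I₀ ∩ A).card) * B.card.choose ((I₀ ∩ B).card) := by
          rw [Finset.card_product, Finset.card_powersetCard, Finset.card_powersetCard]
        have hkA : (I₀ ∩ A).card ≤ A.card := Finset.card_le_card Finset.inter_subset_right
        have hjB : (I₀ ∩ B).card ≤ B.card := Finset.card_le_card Finset.inter_subset_right
        rcases lt_or_eq_of_le hnM with hlt | heqM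
        · -- 2n < M
          rw [g_lt hlt]
          calc (fam w S n t).card
              ≤ A.card.choose ((I₀ ∩ A).card) * B.card.choose ((I₀ ∩ B).card) := by
                rw [← hprod]; exact hinj
            _ ≤ (A.card + B.card - 1).choose ((I₀ ∩ A).card + (I₀ ∩ B).card) :=
                L1a hA1 hB1 hkA hjB (by omega)
            _ = (M-1).choose n := by rw [hcards, hkj₀]
        · -- 2n = M
          rw [g_mid heqM.symm]
          calc (fam w S n t).card
              ≤ A.card.choose ((I₀ ∩ A).card) * B.card.choose ((I₀ ∩ B).card) := by
                rw [← hprod]; exact hinj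
            _ ≤ 2 * ((A.card + B.card - 2).choose ((I₀ ∩ A).card + (I₀ ∩ B).card - 1)) :=
                L1b hA1 hB1 hkA hjB (by omega)
            _ = 2 * ((M-2).choose (n-1)) := by rw [hcards, hkj₀]
    · -- at least three values
      push_neg at htwo
      obtain ⟨c, hcS, hca, hcb⟩ := htwo
      have hM4 : 4 ≤ M := by omega
      have hab' : a ≠ b := fun h => hab (by rw [h])
      have hac' : a ≠ c := fun h => hca (by rw [h])
      have hbc' : b ≠ c := fun h => hcb (by rw [h])
      have habc_sub : ({a, b, c} : Finset ι) ⊆ S := by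
        intro x hx
        simp only [Finset.mem_insert, Finset.mem_singleton] at hx
        rcases hx with rfl | rfl | rfl <;> assumption
      have h3 : ({a, b, c} : Finset ι).card = 3 := by
        rw [Finset.card_insert_of_notMem (by simp [hab', hac']),
          Finset.card_insert_of_notMem (by simp [hbc']), Finset.card_singleton]
      obtain ⟨d, hd⟩ : (S \ {a,b,c}).Nonempty := by
        apply Finset.card_pos.mp
        rw [Finset.card_sdiff_of_subset habc_sub, h3, hS]
        omega
      rw [Finset.mem_sdiff] at hd
      obtain ⟨hdS, hdabc⟩ := hd
      simp only [Finset.mem_insert, Finset.mem_singleton, not_or] at hdabc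
      obtain ⟨hda', hdb', hdc'⟩ := hdabc
      have main3 : ∀ x y zz dd, x ∈ S → y ∈ S → zz ∈ S → dd ∈ S → w x ≠ w y →
          zz ≠ x → zz ≠ y → dd ≠ x → dd ≠ y → w zz ≠ w dd →
          (fam w S n t).card ≤ gOdlyzko M n := by
        intro x y zz dd hx hy hz hdd hwxy hzx hzy hddx hddy hzd
        have hxy_ne : x ≠ y := fun h => hwxy (by rw [h])
        set S' := S \ {x, y} with hS'def
        have hxyS : ({x, y} : Finset ι) ⊆ S := by
          intro u hu
          simp only [Finset.mem_insert, Finset.mem_singleton] at hu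
          rcases hu with rfl | rfl <;> assumption
        have hS'card : S'.card = M - 2 := by
          rw [hS'def, Finset.card_sdiff_of_subset hxyS, Finset.card_pair hxy_ne, hS]
        have hmemS' : ∀ u, u ∈ S' ↔ u ∈ S ∧ u ≠ x ∧ u ≠ y := by
          intro u
          simp [hS'def, Finset.mem_sdiff, not_or]
        have hnc' : ∃ p ∈ S', ∃ q ∈ S', w p ≠ w q :=
          ⟨zz, (hmemS' zz).mpr ⟨hz, hzx, hzy⟩, dd, (hmemS' dd).mpr ⟨hdd, hddx, hddy⟩, hzd⟩
        have IH' : ∀ (n' : ℕ) (t' : ℝ), (fam w S' n' t').card ≤ gOdlyzko (M-2) n' :=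
          fun n' t' => IH (M-2) (by omega) S' hS'card hnc' n' t'
        -- decompose
        set F := fam w S n t with hF
        have hd1 := Finset.card_filter_add_card_filter_not
          (s := F) (p := fun I => x ∈ I)
        have hd2 := Finset.card_filter_add_card_filter_not
          (s := F.filter (fun I => x ∈ I)) (p := fun I => y ∈ I)
        have hd3 := Finset.card_filter_add_card_filter_not
          (s := F.filter (fun I => ¬ x ∈ I)) (p := fun I => y ∈ I)
        rw [Finset.filter_filter, Finset.filter_filter] at hd2
        rw [Finset.filter_filter, Finset.filter_filter] at hd3
        -- bound 1 : x ∈ I and y ∈ I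
        have hB1 : (F.filter (fun I => x ∈ I ∧ y ∈ I)).card
            ≤ (fam w S' (n-2) (t - w x - w y)).card := by
          apply Finset.card_le_card_of_injOn (fun I => (I.erase x).erase y)
          · intro I hI
            simp only [Finset.mem_coe] at hI ⊢
            rw [Finset.mem_filter] at hI
            obtain ⟨hIfam, hxI, hyI⟩ := hI
            rw [mem_fam] at hIfam ⊢
            obtain ⟨hIS, hc, hsum⟩ := hIfam
            have hyIx : y ∈ I.erase x := Finset.mem_erase.mpr ⟨fun h => hxy_ne (by rw [h]), hyI⟩
            refine ⟨?_, ?_, ?_⟩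
            · intro i hi
              rw [Finset.mem_erase] at hi
              obtain ⟨hiy, hi'⟩ := hi
              rw [Finset.mem_erase] at hi'
              exact (hmemS' i).mpr ⟨hIS hi'.2, hi'.1, hiy⟩
            · rw [Finset.card_erase_of_mem hyIx, Finset.card_erase_of_mem hxI, hc]
              omega
            · have e1 := Finset.add_sum_erase I w hxI
              have e2 := Finset.add_sum_erase (I.erase x) w hyIx
              linarith
          · intro I hI I' hI' heqp
            rw [Finset.mem_coe, Finset.mem_filter] at hI hI'
            have hrec : ∀ J : Finset ι, x ∈ J → y ∈ J →
                J = insert x (insert y ((J.erase x).erase y)) := by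
              intro J hxJ hyJ
              rw [Finset.insert_erase (Finset.mem_erase.mpr
                ⟨fun h => hxy_ne (by rw [h]), hyJ⟩), Finset.insert_erase hxJ]
            have heqp' : (I.erase x).erase y = (I'.erase x).erase y := heqp
            rw [hrec I hI.2.1 hI.2.2, hrec I' hI'.2.1 hI'.2.2, heqp']
        -- bound 4 : x ∉ I, y ∉ I
        have hB4 : (F.filter (fun I => ¬ x ∈ I ∧ ¬ y ∈ I)).card
            ≤ (fam w S' n t).card := by
          apply Finset.card_le_card
          intro I hI
          rw [Finset.mem_filter] at hI
          obtain ⟨hIfam, hxI, hyI⟩ := hI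
          rw [mem_fam] at hIfam ⊢
          refine ⟨?_, hIfam.2.1, hIfam.2.2⟩
          intro i hi
          exact (hmemS' i).mpr ⟨hIfam.1 hi, fun h => hxI (h ▸ hi), fun h => hyI (h ▸ hi)⟩
        -- bounds 2,3 : exactly one of x, y
        have hB2 : (F.filter (fun I => x ∈ I ∧ ¬ y ∈ I)).card
            ≤ (fam w S' (n-1) (t - w x)).card := by
          apply Finset.card_le_card_of_injOn (fun I => I.erase x)
          · intro I hI
            simp only [Finset.mem_coe] at hI ⊢
            rw [Finset.mem_filter] at hI
            obtain ⟨hIfam, hxI, hyI⟩ := hI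
            rw [mem_fam] at hIfam ⊢
            obtain ⟨hIS, hc, hsum⟩ := hIfam
            refine ⟨?_, ?_, ?_⟩
            · intro i hi
              rw [Finset.mem_erase] at hi
              exact (hmemS' i).mpr ⟨hIS hi.2, hi.1, fun h => hyI (h ▸ hi.2)⟩
            · rw [Finset.card_erase_of_mem hxI, hc]
            · have e1 := Finset.add_sum_erase I w hxI
              linarith
          · intro I hI I' hI' heqp
            rw [Finset.mem_coe, Finset.mem_filter] at hI hI'
            have heqp' : I.erase x = I'.erase x := heqp
            rw [← Finset.insert_erase hI.2.1, ← Finset.insert_erase hI'.2.1, heqp']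
        have hB3 : (F.filter (fun I => ¬ x ∈ I ∧ y ∈ I)).card
            ≤ (fam w S' (n-1) (t - w y)).card := by
          apply Finset.card_le_card_of_injOn (fun I => I.erase y)
          · intro I hI
            simp only [Finset.mem_coe] at hI ⊢
            rw [Finset.mem_filter] at hI
            obtain ⟨hIfam, hxI, hyI⟩ := hI
            rw [mem_fam] at hIfam ⊢
            obtain ⟨hIS, hc, hsum⟩ := hIfam
            refine ⟨?_, ?_, ?_⟩
            · intro i hi
              rw [Finset.mem_erase] at hi
              exact (hmemS' i).mpr ⟨hIS hi.2, fun h => hxI (h ▸ hi.2), hi.1⟩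
            · rw [Finset.card_erase_of_mem hyI, hc]
            · have e1 := Finset.add_sum_erase I w hyI
              linarith
          · intro I hI I' hI' heqp
            rw [Finset.mem_coe, Finset.mem_filter] at hI hI'
            have heqp' : I.erase y = I'.erase y := heqp
            rw [← Finset.insert_erase hI.2.2, ← Finset.insert_erase hI'.2.2, heqp']
        -- the two middle families are disjoint
        have hdisj : Disjoint (fam w S' (n-1) (t - w x)) (fam w S' (n-1) (t - w y)) := by
          rw [Finset.disjoint_left]
          intro J hJ1 hJ2
          rw [mem_fam] at hJ1 hJ2
          have : t - w x = t - w y := by rw [← hJ1.2.2, hJ2.2.2]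
          exact hwxy (by linarith)
        have hmid : (fam w S' (n-1) (t - w x)).card + (fam w S' (n-1) (t - w y)).card
            ≤ (M-2).choose (n-1) := by
          rw [← Finset.card_union_of_disjoint hdisj]
          calc ((fam w S' (n-1) (t - w x)) ∪ (fam w S' (n-1) (t - w y))).card
              ≤ (S'.powersetCard (n-1)).card := by
                apply Finset.card_le_card
                intro J hJ
                rw [Finset.mem_union] at hJ
                rcases hJ with hJ | hJ <;>
                  · rw [mem_fam] at hJ
                    rw [Finset.mem_powersetCard]
                    exact ⟨hJ.1, hJ.2.1⟩
            _ = (M-2).choose (n-1) := by rw [Finset.card_powersetCard, hS'card]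
        -- assemble
        obtain ⟨k', rfl⟩ : ∃ k', n = k' + 2 := ⟨n - 2, by omega⟩
        have hstep := step3 (m := M - 2) (k := k') (by omega)
        have hM2e : M - 2 + 2 = M := by omega
        rw [hM2e] at hstep
        have e1 : k' + 2 - 2 = k' := by omega
        have e2 : k' + 2 - 1 = k' + 1 := by omega
        have hIH1 := IH' k' (t - w x - w y)
        have hIH4 := IH' (k' + 2) t
        rw [e1] at hB1
        rw [e2] at hB2 hB3 hmid
        omega
      -- choose the right pair
      by_cases hda : w d = w a
      · exact main3 a c b d haS hcS hbS hdS (fun h => hca h.symm) hab'.symm hbc'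
          hda' hdc' (fun h => hab (by rw [h, hda]))
      · exact main3 b c a d hbS hcS haS hdS (fun h => hcb h.symm) hab' hac'
          hdb' hdc' (fun h => hda (h.symm))
  -- dispatch
  rcases le_or_gt n 1 with hn1 | hn1
  · interval_cases n
    · exact hzero t
    · exact hone t
  · rcases le_or_gt (2*n) M with h2 | h2
    · exact aux n t hn1 h2
    · by_cases hnM : n ≤ M
      · have hcompl := fam_compl_card w S n t (by omega)
        rw [hS] at hcompl
        have hgs : gOdlyzko M (M - n) = gOdlyzko M n := gsymm hnM
        rw [hcompl, ← hgs]
        rcases le_or_gt (M - n) 1 with hn'1 | hn'1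
        · interval_cases h : (M - n)
          · exact hzero _
          · exact hone _
        · exact aux (M - n) _ hn'1 (by omega)
      · have : S.card.choose n = 0 := by
          rw [hS]; exact Nat.choose_eq_zero_of_lt (by omega)
        have := fam_card_le_choose w S n t
        omega

end FamSection

/-- If an eigenvector `Ψ` of `H₀ + V` has strictly more than `g(M,N)` nonvanishing
coefficients, then `Ψ` is not an eigenvector of any `H₀ + V'` where `v'` differs from `v`
by more than an additive constant. -/
theorem odlyzko_uv_condition (M N : ℕ) (hN : 1 ≤ N) (hNM : N < M)
    (H0 : Matrix (FIdx M N) (FIdx M N) ℂ) (hH0 : H0.IsHermitian)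
    (v : Fin M → ℝ) (E : ℝ) (Ψ : FIdx M N → ℂ) (hΨ : Ψ ≠ 0)
    (heig : (H0 + Vmat M N v).mulVec Ψ = (E : ℂ) • Ψ)
    (hcount : gOdlyzko M N < {I : FIdx M N | Ψ I ≠ 0}.ncard) :
    ∀ (v' : Fin M → ℝ) (E' : ℝ), (H0 + Vmat M N v').mulVec Ψ = (E' : ℂ) • Ψ →
      ∃ c : ℝ, ∀ i, v' i = v i + c := by
  classical
  intro v' E' heig'
  by_cases hconst : ∀ i j : Fin M, v i - v' i = v j - v' j
  · have hM1 : 0 < M := by omega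
    refine ⟨v' ⟨0, hM1⟩ - v ⟨0, hM1⟩, fun i => ?_⟩
    have := hconst i ⟨0, hM1⟩
    linarith
  · exfalso
    push_neg at hconst
    obtain ⟨i, j, hij⟩ := hconst
    set w : Fin M → ℝ := fun i => v i - v' i with hw
    have hkey : ∀ I : FIdx M N, Ψ I ≠ 0 → ∑ i ∈ I.1, w i = E - E' := by
      intro I hI
      have h1 := congrFun heig I
      have h2 := congrFun heig' I
      rw [Matrix.add_mulVec] at h1 h2
      simp only [Pi.add_apply, Pi.smul_apply, smul_eq_mul] at h1 h2
      rw [Vmat, Matrix.mulVec_diagonal] at h1 h2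
      have h3 : (((∑ i ∈ I.1, v i : ℝ) : ℂ) - ((∑ i ∈ I.1, v' i : ℝ) : ℂ)) * Ψ I
          = ((E : ℂ) - (E' : ℂ)) * Ψ I := by linear_combination h1 - h2
      have h4 := mul_right_cancel₀ hI h3
      have h5 : (∑ i ∈ I.1, v i) - (∑ i ∈ I.1, v' i) = E - E' := by exact_mod_cast h4
      rw [hw]
      rw [Finset.sum_sub_distrib]
      linarith
    have hsub : {I : FIdx M N | Ψ I ≠ 0}
        = ↑(Finset.univ.filter (fun I : FIdx M N => Ψ I ≠ 0)) := by
      ext I; simp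
    rw [hsub, Set.ncard_coe_finset] at hcount
    have hbound : (Finset.univ.filter (fun I : FIdx M N => Ψ I ≠ 0)).card
        ≤ gOdlyzko M N := by
      have hle : (Finset.univ.filter (fun I : FIdx M N => Ψ I ≠ 0)).card
          ≤ (fam w Finset.univ N (E - E')).card := by
        apply Finset.card_le_card_of_injOn (fun I => I.1)
        · intro I hI
          simp only [Finset.mem_coe] at hI ⊢
          rw [Finset.mem_filter] at hI
          rw [mem_fam]
          exact ⟨Finset.subset_univ _, I.2, hkey I hI.2⟩
        · intro I _ I' _ h
          exact Subtype.ext h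
      refine le_trans hle (fam_card_le_g w M Finset.univ ?_ ?_ N (E - E'))
      · simp
      · exact ⟨i, Finset.mem_univ i, j, Finset.mem_univ j, fun h => hij (by simpa [hw] using h)⟩
    omega
end

section
/- The ensemble constrained-search functional F(ρ) = inf{ Tr(Γ H₀) : Γ a density matrix on Λ^N ℂ^M with density ρ } (extended by +∞ outside P_{M,N}) is convex on ℝ^M, and it equals the convex hull of the pure-state constrained-search functional F̃(ρ) = inf{ ⟨Ψ, H₀Ψ⟩ : Ψ normalized with density ρ }. -/
open scoped BigOperators ComplexOrder

/-- Density of an ensemble state (density matrix) `Γ`: `ρ_i = Tr(Γ â_i†â_i)`. -/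
noncomputable def edensity (M N : ℕ) (Γ : Matrix (FIdx M N) (FIdx M N) ℂ) (i : Fin M) : ℝ :=
  ∑ I : FIdx M N, if i ∈ I.1 then (Γ I I).re else 0

/-- The pure-state (Levy) constrained-search functional `F̃`, `+∞` for non-representable
densities. -/
noncomputable def Ftilde (M N : ℕ) (H0 : Matrix (FIdx M N) (FIdx M N) ℂ)
    (ρ : Fin M → ℝ) : EReal :=
  sInf {x : EReal | ∃ Ψ : FIdx M N → ℂ,
    (∑ I : FIdx M N, Complex.normSq (Ψ I) = 1) ∧
    (∀ i, density M N Ψ i = ρ i) ∧ x = (quadForm M N H0 Ψ : ℝ)}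

/-- The ensemble (Lieb) constrained-search functional `F`, `+∞` for non-representable
densities. -/
noncomputable def Fens (M N : ℕ) (H0 : Matrix (FIdx M N) (FIdx M N) ℂ)
    (ρ : Fin M → ℝ) : EReal :=
  sInf {x : EReal | ∃ Γ : Matrix (FIdx M N) (FIdx M N) ℂ,
    Γ.PosSemidef ∧ Γ.trace = 1 ∧
    (∀ i, edensity M N Γ i = ρ i) ∧ x = (((Γ * H0).trace).re : ℝ)}

/-- Convexity of an extended-real-valued functional on densities. -/
def ConvexFn (M : ℕ) (g : (Fin M → ℝ) → EReal) : Prop :=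
  ∀ (ρ σ : Fin M → ℝ) (a b : ℝ), 0 ≤ a → 0 ≤ b → a + b = 1 →
    g (a • ρ + b • σ) ≤ (a : EReal) * g ρ + (b : EReal) * g σ

/-!
Both functionals are fibrewise infima `ρ ↦ inf {e | (ρ, e) ∈ S}` of a set `S ⊆ ℝ^M × ℝ` of
(density, energy) pairs: `F̃` of the pairs realised by normalized pure states, `F` of those
realised by density matrices. The map `Γ ↦ (density, energy)` is `ℝ`-linear and the spectral
theorem writes every density matrix as a convex combination of projections `|Ψ⟩⟨Ψ|`, so the
second set is the convex hull of the first. A fibrewise infimum of a convex set is convex, and a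
convex `G ≤ F̃` has a convex epigraph containing the pure pairs, hence also their convex hull,
which says `G ≤ F`.
-/

open Set Matrix
open scoped Pointwise

theorem EReal.sInf_image_coe {s : Set ℝ} (hne : s.Nonempty) (hbdd : BddBelow s) :
    sInf (((↑) : ℝ → EReal) '' s) = sInf s := by
  refine le_antisymm (EReal.le_of_forall_lt_iff_le.mp fun c hc => ?_) (le_sInf ?_)
  · obtain ⟨x, hx, hxc⟩ := exists_lt_of_csInf_lt hne (EReal.coe_lt_coe_iff.mp hc)
    exact (sInf_le (mem_image_of_mem _ hx)).trans (EReal.coe_le_coe_iff.mpr hxc.le)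
  · rintro _ ⟨x, hx, rfl⟩
    exact EReal.coe_le_coe_iff.mpr (csInf_le hbdd hx)

section FiberInf

variable {E : Type*}

-- `⊤` wherever the fibre is empty, since `sInf ∅ = ⊤`.
noncomputable def fiberInf (S : Set (E × ℝ)) (x : E) : EReal :=
  sInf (((↑) : ℝ → EReal) '' {r | (x, r) ∈ S})

theorem fiberInf_anti {S T : Set (E × ℝ)} (h : S ⊆ T) (x : E) : fiberInf T x ≤ fiberInf S x :=
  sInf_le_sInf (image_mono fun _ hr => h hr)

theorem fiberInf_le {S : Set (E × ℝ)} {x : E} {r : ℝ} (h : (x, r) ∈ S) : fiberInf S x ≤ r :=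
  sInf_le (mem_image_of_mem _ h)

theorem coe_le_fiberInf {S : Set (E × ℝ)} {m : ℝ} (hm : ∀ p ∈ S, m ≤ p.2) (x : E) :
    (m : EReal) ≤ fiberInf S x :=
  le_sInf <| by rintro _ ⟨r, hr, rfl⟩; exact EReal.coe_le_coe_iff.mpr (hm _ hr)

theorem fiberInf_eq_top {S : Set (E × ℝ)} {x : E} (h : {r | (x, r) ∈ S} = ∅) :
    fiberInf S x = ⊤ := by
  rw [fiberInf, h, image_empty, sInf_empty]

theorem snd_ge_of_mem_convexHull [AddCommGroup E] [Module ℝ E] {S : Set (E × ℝ)} {m : ℝ}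
    (hm : ∀ p ∈ S, m ≤ p.2) : ∀ p ∈ convexHull ℝ S, m ≤ p.2 :=
  convexHull_min hm (convex_halfSpace_ge (LinearMap.snd ℝ E ℝ).isLinear m)

end FiberInf

section ConvexFn

variable {M : ℕ}

-- The lower bound keeps `fiberInf S` away from `⊥`, where `⊥ + ⊤ = ⊥` would break convexity.
theorem convexFn_fiberInf {S : Set ((Fin M → ℝ) × ℝ)} (hS : Convex ℝ S) {m : ℝ}
    (hm : ∀ p ∈ S, m ≤ p.2) : ConvexFn M (fiberInf S) := by
  intro ρ σ a b ha hb hab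
  rcases ha.eq_or_lt with rfl | ha
  · simp [show b = 1 by linarith]
  rcases hb.eq_or_lt with rfl | hb
  · simp [show a = 1 by linarith]
  have hbdd : ∀ x, BddBelow {r | (x, r) ∈ S} := fun x => ⟨m, fun r hr => hm _ hr⟩
  have hmul_ne_bot : ∀ {c : ℝ} (x : Fin M → ℝ), 0 < c → (c : EReal) * fiberInf S x ≠ ⊥ := by
    intro c x hc
    refine ((EReal.bot_lt_coe (c * m)).trans_le ?_).ne'
    rw [EReal.coe_mul]
    exact mul_le_mul_of_nonneg_left (coe_le_fiberInf hm x) (EReal.coe_nonneg.mpr hc.le)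
  rcases {r | (ρ, r) ∈ S}.eq_empty_or_nonempty with hρ | hρ
  · rw [fiberInf_eq_top hρ, EReal.coe_mul_top_of_pos ha,
      EReal.top_add_of_ne_bot (hmul_ne_bot σ hb)]
    exact le_top
  rcases {r | (σ, r) ∈ S}.eq_empty_or_nonempty with hσ | hσ
  · rw [fiberInf_eq_top hσ, EReal.coe_mul_top_of_pos hb,
      EReal.add_top_of_ne_bot (hmul_ne_bot ρ ha)]
    exact le_top
  have hsub :
      a • {r | (ρ, r) ∈ S} + b • {r | (σ, r) ∈ S} ⊆ {r | (a • ρ + b • σ, r) ∈ S} := by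
    rintro _ ⟨_, ⟨x, hx, rfl⟩, _, ⟨y, hy, rfl⟩, rfl⟩
    simpa using hS hx hy ha.le hb.le hab
  have hne := (hρ.smul_set (a := a)).add (hσ.smul_set (a := b))
  have haρ := (hbdd ρ).smul_of_nonneg ha.le
  have hbσ := (hbdd σ).smul_of_nonneg hb.le
  calc fiberInf S (a • ρ + b • σ)
      ≤ sInf (((↑) : ℝ → EReal) '' (a • {r | (ρ, r) ∈ S} + b • {r | (σ, r) ∈ S})) :=
        sInf_le_sInf (image_mono hsub)
    _ = a * fiberInf S ρ + b * fiberInf S σ := by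
      rw [EReal.sInf_image_coe hne (haρ.add hbσ), fiberInf, fiberInf,
        EReal.sInf_image_coe hρ (hbdd ρ), EReal.sInf_image_coe hσ (hbdd σ),
        csInf_add hρ.smul_set haρ hσ.smul_set hbσ, Real.sInf_smul_of_nonneg ha.le,
        Real.sInf_smul_of_nonneg hb.le]
      norm_cast

theorem ConvexFn.convex_epigraph {G : (Fin M → ℝ) → EReal} (hG : ConvexFn M G) :
    Convex ℝ {p : (Fin M → ℝ) × ℝ | G p.1 ≤ p.2} := by
  intro p hp q hq a b ha hb hab
  calc G (a • p.1 + b • q.1) ≤ a * G p.1 + b * G q.1 := hG _ _ _ _ ha hb hab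
    _ ≤ a * p.2 + b * q.2 := by
      gcongr
      exacts [hp, hq]
    _ = (a • p + b • q).2 := by simp

theorem ConvexFn.le_fiberInf_convexHull {G : (Fin M → ℝ) → EReal} (hG : ConvexFn M G)
    {S : Set ((Fin M → ℝ) × ℝ)} (hGS : ∀ x, G x ≤ fiberInf S x) (x : Fin M → ℝ) :
    G x ≤ fiberInf (convexHull ℝ S) x := by
  have hS : S ⊆ {p | G p.1 ≤ p.2} := fun p hp => (hGS p.1).trans (fiberInf_le hp)
  refine le_sInf ?_
  rintro _ ⟨r, hr, rfl⟩
  exact convexHull_min hS hG.convex_epigraph hr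

end ConvexFn

theorem Matrix.IsHermitian.eq_sum_eigenvalues_smul_vecMulVec {𝕜 n : Type*} [RCLike 𝕜]
    [Fintype n] [DecidableEq n] {A : Matrix n n 𝕜} (hA : A.IsHermitian) :
    A = ∑ k, hA.eigenvalues k •
      vecMulVec ⇑(hA.eigenvectorBasis k) (star ⇑(hA.eigenvectorBasis k)) := by
  conv_lhs => rw [hA.spectral_theorem, Unitary.conjStarAlgAut_apply]
  ext i j
  simp only [diagonal, Function.comp_apply, mul_apply, eigenvectorUnitary_apply, of_apply, mul_ite,
    mul_zero, Finset.sum_ite_eq', Finset.mem_univ, ↓reduceIte, star_apply, RCLike.star_def,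
    sum_apply, smul_apply, vecMulVec_apply, Pi.star_apply, RCLike.real_smul_eq_coe_mul]
  exact Finset.sum_congr rfl fun k _ => by ring

section DensityMatrices

variable {M N : ℕ}

def densityMatrices (M N : ℕ) : Set (Matrix (FIdx M N) (FIdx M N) ℂ) :=
  {Γ | Γ.PosSemidef ∧ Γ.trace = 1}

theorem convex_densityMatrices : Convex ℝ (densityMatrices M N) := by
  rintro Γ ⟨hΓ, htr⟩ Γ' ⟨hΓ', htr'⟩ a b ha hb hab
  refine ⟨(hΓ.smul ha).add (hΓ'.smul hb), ?_⟩
  rw [trace_add, trace_smul, trace_smul, htr, htr', ← add_smul, hab, one_smul]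

theorem edensity_eq_sum (Γ : Matrix (FIdx M N) (FIdx M N) ℂ) (i : Fin M) :
    edensity M N Γ i = ∑ I with i ∈ I.1, (Γ I I).re := by
  rw [edensity, Finset.sum_filter]

noncomputable def densityEnergy (M N : ℕ) (H0 : Matrix (FIdx M N) (FIdx M N) ℂ) :
    Matrix (FIdx M N) (FIdx M N) ℂ →ₗ[ℝ] (Fin M → ℝ) × ℝ where
  toFun Γ := (edensity M N Γ, ((Γ * H0).trace).re)
  map_add' Γ Γ' := by
    ext i <;> simp [edensity_eq_sum, Finset.sum_add_distrib, Matrix.add_mul]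
  map_smul' c Γ := by
    ext i <;> simp [edensity_eq_sum, Finset.mul_sum]

def pureDensityEnergies (M N : ℕ) (H0 : Matrix (FIdx M N) (FIdx M N) ℂ) :
    Set ((Fin M → ℝ) × ℝ) :=
  (fun Ψ => (density M N Ψ, quadForm M N H0 Ψ)) '' {Ψ | ∑ I, Complex.normSq (Ψ I) = 1}

theorem trace_vecMulVec_self_star (Ψ : FIdx M N → ℂ) :
    (vecMulVec Ψ (star Ψ)).trace = ((∑ I, Complex.normSq (Ψ I) : ℝ) : ℂ) := by
  simp [trace_vecMulVec, dotProduct, Complex.mul_conj]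

theorem densityEnergy_vecMulVec_self_star (H0 : Matrix (FIdx M N) (FIdx M N) ℂ)
    (Ψ : FIdx M N → ℂ) :
    densityEnergy M N H0 (vecMulVec Ψ (star Ψ)) = (density M N Ψ, quadForm M N H0 Ψ) := by
  ext i
  · simp [densityEnergy, edensity, density, vecMulVec_apply, Complex.mul_conj]
  · simp only [densityEnergy, LinearMap.coe_mk, AddHom.coe_mk, quadForm]
    rw [vecMulVec_mul, trace_vecMulVec, dotProduct_mulVec, dotProduct_comm]

theorem neg_sum_norm_le_quadForm (H : Matrix (FIdx M N) (FIdx M N) ℂ) {Ψ : FIdx M N → ℂ}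
    (hΨ : ∑ I, Complex.normSq (Ψ I) = 1) : -(∑ I, ∑ J, ‖H I J‖) ≤ quadForm M N H Ψ := by
  have hle : ∀ I, ‖Ψ I‖ ≤ 1 := fun I => by
    have : Complex.normSq (Ψ I) ≤ 1 :=
      hΨ ▸ Finset.single_le_sum (fun J _ => Complex.normSq_nonneg (Ψ J)) (Finset.mem_univ I)
    rw [Complex.normSq_eq_norm_sq] at this
    nlinarith [norm_nonneg (Ψ I)]
  have hnorm : ‖star Ψ ⬝ᵥ H *ᵥ Ψ‖ ≤ ∑ I, ∑ J, ‖H I J‖ := by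
    simp only [dotProduct, mulVec, Finset.mul_sum]
    refine (norm_sum_le _ _).trans <| Finset.sum_le_sum fun I _ =>
      (norm_sum_le _ _).trans <| Finset.sum_le_sum fun J _ => ?_
    rw [norm_mul, norm_mul, Pi.star_apply, norm_star]
    calc ‖Ψ I‖ * (‖H I J‖ * ‖Ψ J‖) ≤ 1 * (‖H I J‖ * 1) := by gcongr <;> exact hle _
      _ = ‖H I J‖ := by ring
  exact (neg_le_neg hnorm).trans <| (neg_le_neg (Complex.abs_re_le_norm _)).trans (neg_abs_le _)

theorem densityEnergy_image_densityMatrices (H0 : Matrix (FIdx M N) (FIdx M N) ℂ) :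
    densityEnergy M N H0 '' densityMatrices M N = convexHull ℝ (pureDensityEnergies M N H0) := by
  refine Subset.antisymm ?_ (convexHull_min ?_ (convex_densityMatrices.linear_image _))
  · rintro _ ⟨Γ, ⟨hΓ, htr⟩, rfl⟩
    set b := hΓ.1.eigenvectorBasis
    have hb : ∀ k, ∑ I, Complex.normSq (b k I) = 1 := fun k => by
      have := EuclideanSpace.norm_sq_eq (b k)
      rw [b.orthonormal.1 k] at this
      simpa [Complex.normSq_eq_norm_sq] using this.symm
    have hsum : ∑ k, hΓ.1.eigenvalues k = 1 := by
      have := hΓ.1.trace_eq_sum_eigenvalues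
      rw [htr] at this
      simpa using (congrArg Complex.re this).symm
    rw [congrArg (densityEnergy M N H0) hΓ.1.eq_sum_eigenvalues_smul_vecMulVec, map_sum]
    simp_rw [map_smul, densityEnergy_vecMulVec_self_star]
    exact (convex_convexHull ℝ _).sum_mem (fun k _ => hΓ.eigenvalues_nonneg k) hsum
      fun k _ => subset_convexHull ℝ _ ⟨_, hb k, rfl⟩
  · rintro _ ⟨Ψ, hΨ, rfl⟩
    refine ⟨vecMulVec Ψ (star Ψ), ⟨posSemidef_vecMulVec_self_star Ψ, ?_⟩,
      densityEnergy_vecMulVec_self_star H0 Ψ⟩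
    rw [trace_vecMulVec_self_star, hΨ, Complex.ofReal_one]

theorem Ftilde_eq_fiberInf (H0 : Matrix (FIdx M N) (FIdx M N) ℂ) :
    Ftilde M N H0 = fiberInf (pureDensityEnergies M N H0) := by
  funext ρ
  simp only [Ftilde, fiberInf, pureDensityEnergies]
  congr 1
  ext x
  simp only [mem_ofPred_eq, mem_image, Prod.mk.injEq, funext_iff, ↓existsAndEq, and_true]
  aesop

theorem Fens_eq_fiberInf (H0 : Matrix (FIdx M N) (FIdx M N) ℂ) :
    Fens M N H0 = fiberInf (densityEnergy M N H0 '' densityMatrices M N) := by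
  funext ρ
  simp only [Fens, fiberInf, densityMatrices]
  congr 1
  ext x
  simp only [mem_ofPred_eq, densityEnergy, LinearMap.coe_mk, AddHom.coe_mk, mem_image,
    Prod.mk.injEq, funext_iff, ↓existsAndEq, and_true]
  aesop

end DensityMatrices

theorem F_convex_hull_general (M N : ℕ)
    (H0 : Matrix (FIdx M N) (FIdx M N) ℂ) :
    ConvexFn M (Fens M N H0) ∧
    (∀ ρ, Fens M N H0 ρ ≤ Ftilde M N H0 ρ) ∧
    (∀ G : (Fin M → ℝ) → EReal, ConvexFn M G →
      (∀ ρ, G ρ ≤ Ftilde M N H0 ρ) → ∀ ρ, G ρ ≤ Fens M N H0 ρ) := by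
  rw [Fens_eq_fiberInf, densityEnergy_image_densityMatrices, Ftilde_eq_fiberInf]
  have hm : ∀ p ∈ pureDensityEnergies M N H0, -(∑ I, ∑ J, ‖H0 I J‖) ≤ p.2 := by
    rintro _ ⟨Ψ, hΨ, rfl⟩
    exact neg_sum_norm_le_quadForm H0 hΨ
  exact ⟨convexFn_fiberInf (convex_convexHull ℝ _) (snd_ge_of_mem_convexHull hm),
    fiberInf_anti (subset_convexHull ℝ _),
    fun G hG hGF => hG.le_fiberInf_convexHull hGF⟩

/-- The ensemble constrained-search functional `F` is convex, and it is the convex hull of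
the pure-state constrained-search functional `F̃`: it is the largest convex function below
`F̃`. -/
theorem F_convex_hull (M N : ℕ) (hNM : N ≤ M)
    (H0 : Matrix (FIdx M N) (FIdx M N) ℂ) (hH0 : H0.IsHermitian) :
    ConvexFn M (Fens M N H0) ∧
    (∀ ρ, Fens M N H0 ρ ≤ Ftilde M N H0 ρ) ∧
    (∀ G : (Fin M → ℝ) → EReal, ConvexFn M G →
      (∀ ρ, G ρ ≤ Ftilde M N H0 ρ) → ∀ ρ, G ρ ≤ Fens M N H0 ρ) :=
  F_convex_hull_general M N H0
end
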